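/- Let ρ and σ be density matrices on ℂ^n and let ε ≥ 0. If |ρ − σ|₁ ≤ ε, then F(ρ,σ) ≥ 1 − ε. -/

import Mathlib

open Matrix ComplexOrder

attribute [local instance] Classical.propDecidable

/-- The square root of a positive semidefinite matrix, as in the older Mathlib. -/
noncomputable def Matrix.PosSemidef.sqrt {𝕜 : Type*} [RCLike 𝕜] {n : Type*} [Fintype n]
    [DecidableEq n] {A : Matrix n n 𝕜} (hA : A.PosSemidef) : Matrix n n 𝕜 :=
  hA.1.eigenvectorUnitary.1 * diagonal ((↑) ∘ (√·) ∘ hA.1.eigenvalues) *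
    (star hA.1.eigenvectorUnitary : Matrix n n 𝕜)

/-- The trace norm `|M|₁ = tr √(Mᴴ M)` of a complex matrix. -/
noncomputable def traceNorm {n : Type*} [Fintype n] [DecidableEq n]
    (M : Matrix n n ℂ) : ℝ :=
  ((Matrix.posSemidef_conjTranspose_mul_self M).sqrt.trace).re

/-- The fidelity `F(ρ,σ) = (tr √(√ρ σ √ρ))²` of two density matrices. -/
noncomputable def fidelity {n : Type*} [Fintype n] [DecidableEq n]
    (ρ σ : Matrix n n ℂ) : ℝ :=
  if hρ : ρ.PosSemidef then
    if h : (hρ.sqrt * σ * hρ.sqrt).PosSemidef then ((h.sqrt.trace).re) ^ 2 else 0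
  else 0

theorem Matrix.IsHermitian.star_mul_self_mul_eq_diagonal {𝕜 : Type*} [RCLike 𝕜] {n : Type*}
    [Fintype n] [DecidableEq n] {A : Matrix n n 𝕜} (hA : A.IsHermitian) :
    star (hA.eigenvectorUnitary : Matrix n n 𝕜) * A * (hA.eigenvectorUnitary : Matrix n n 𝕜)
      = diagonal (RCLike.ofReal ∘ hA.eigenvalues) := by
  have := congrArg (Unitary.conjStarAlgAut 𝕜 _ hA.eigenvectorUnitary).symm hA.spectral_theorem
  rwa [StarAlgEquiv.symm_apply_apply, Unitary.conjStarAlgAut_symm_apply] at this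

namespace Matrix.PosSemidef

variable {𝕜 : Type*} [RCLike 𝕜] {n : Type*} [Fintype n] [DecidableEq n]

lemma posSemidef_sqrt {A : Matrix n n 𝕜} (hA : A.PosSemidef) : hA.sqrt.PosSemidef := by
  unfold Matrix.PosSemidef.sqrt
  have hd : (diagonal ((↑) ∘ (√·) ∘ hA.1.eigenvalues : n → 𝕜)).PosSemidef :=
    posSemidef_diagonal_iff.mpr fun i => by
      simp only [Function.comp_apply]
      exact RCLike.ofReal_nonneg.mpr (Real.sqrt_nonneg _)
  have := hd.mul_mul_conjTranspose_same (hA.1.eigenvectorUnitary : Matrix n n 𝕜)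
  rwa [← Matrix.star_eq_conjTranspose] at this

lemma sqrt_eq_cfc_real {A : Matrix n n 𝕜} (hA : A.PosSemidef) : hA.sqrt = cfc Real.sqrt A := by
  rw [hA.1.cfc_eq, IsHermitian.cfc, Unitary.conjStarAlgAut_apply]
  rfl

lemma spectrum_nonneg' {A : Matrix n n 𝕜} (hA : A.PosSemidef) {x : ℝ} (hx : x ∈ spectrum ℝ A) :
    0 ≤ x := by
  obtain ⟨i, rfl⟩ := (Set.ext_iff.mp hA.1.spectrum_real_eq_range_eigenvalues x).mp hx
  exact hA.eigenvalues_nonneg i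

lemma sqrt_mul_self {A : Matrix n n 𝕜} (hA : A.PosSemidef) : hA.sqrt * hA.sqrt = A := by
  rw [sqrt_eq_cfc_real hA, ← cfc_mul Real.sqrt Real.sqrt A]
  conv_rhs => rw [← cfc_id' ℝ A hA.1.isSelfAdjoint]
  exact cfc_congr fun x hx => Real.mul_self_sqrt (spectrum_nonneg' hA hx)

lemma eq_sqrt_of_sq_eq {A : Matrix n n 𝕜} (hA : A.PosSemidef) {B : Matrix n n 𝕜}
    (hB : B.PosSemidef) (hAB : A ^ 2 = B) : A = hB.sqrt := by
  subst hAB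
  rw [sqrt_eq_cfc_real hB, ← cfc_comp_pow Real.sqrt 2 A (ha := hA.1.isSelfAdjoint)]
  conv_lhs => rw [← cfc_id' ℝ A hA.1.isSelfAdjoint]
  exact cfc_congr fun x hx => (Real.sqrt_sq (spectrum_nonneg' hA hx)).symm

end Matrix.PosSemidef

namespace FvdG

open Finset

variable {n : Type*} [Fintype n] [DecidableEq n]

lemma spectral_theorem' {X : Matrix n n ℂ} (hX : X.IsHermitian) :
    X = (hX.eigenvectorUnitary : Matrix n n ℂ) * diagonal (RCLike.ofReal ∘ hX.eigenvalues)
      * star (hX.eigenvectorUnitary : Matrix n n ℂ) := by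
  have h := hX.spectral_theorem
  rwa [Unitary.conjStarAlgAut_apply] at h

lemma trace_conj (V M : Matrix n n ℂ) (hV : V ∈ Matrix.unitaryGroup n ℂ) :
    (star V * M * V).trace = M.trace := by
  rw [Matrix.trace_mul_cycle, (Matrix.mem_unitaryGroup_iff).mp hV, one_mul]

lemma conj_mul (V X Y : Matrix n n ℂ) (hV : V ∈ Matrix.unitaryGroup n ℂ) :
    star V * (X * Y) * V = (star V * X * V) * (star V * Y * V) := by
  have h1 : V * star V = 1 := (Matrix.mem_unitaryGroup_iff).mp hV
  simp only [mul_assoc]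
  conv_rhs => rw [← mul_assoc V (star V), h1, one_mul]

lemma entry_dot (M V : Matrix n n ℂ) (i : n) :
    (star V * M * V) i i = star (fun k => V k i) ⬝ᵥ (M *ᵥ fun k => V k i) := by
  simp only [Matrix.mul_apply, Matrix.mulVec, dotProduct, Matrix.star_apply,
    Pi.star_apply, Finset.sum_mul, Finset.mul_sum]
  rw [Finset.sum_comm]
  congr 1; ext k; congr 1; ext j; ring

lemma trace_sqrt_re {M : Matrix n n ℂ} (hM : M.PosSemidef) :
    hM.sqrt.trace.re = ∑ i, Real.sqrt (hM.1.eigenvalues i) := by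
  unfold Matrix.PosSemidef.sqrt
  rw [Matrix.trace_mul_cycle,
    (Matrix.mem_unitaryGroup_iff').mp hM.1.eigenvectorUnitary.2, one_mul, Matrix.trace_diagonal]
  simp [Complex.re_sum]

lemma trace_sqrt_nonneg {M : Matrix n n ℂ} (hM : M.PosSemidef) :
    0 ≤ hM.sqrt.trace.re := by
  rw [trace_sqrt_re hM]
  exact Finset.sum_nonneg fun i _ => Real.sqrt_nonneg _

lemma conj_diag_mul {U : Matrix n n ℂ} (hU : U ∈ Matrix.unitaryGroup n ℂ) (d e : n → ℂ) :
    (U * diagonal d * star U) * (U * diagonal e * star U)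
      = U * diagonal (fun i => d i * e i) * star U := by
  have h1 : star U * U = 1 := (Matrix.mem_unitaryGroup_iff').mp hU
  calc (U * diagonal d * star U) * (U * diagonal e * star U)
      = U * (diagonal d * ((star U * U) * (diagonal e * star U))) := by
        simp only [mul_assoc]
    _ = U * diagonal (fun i => d i * e i) * star U := by
        rw [h1, one_mul]
        simp only [← mul_assoc, diagonal_mul_diagonal]

lemma sqrt_conj_diag {X : Matrix n n ℂ} (hX : X.IsHermitian) :
    (Matrix.posSemidef_conjTranspose_mul_self X).sqrt =
      (hX.eigenvectorUnitary : Matrix n n ℂ)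
        * diagonal (fun i => ((|hX.eigenvalues i| : ℝ) : ℂ))
        * star (hX.eigenvectorUnitary : Matrix n n ℂ) := by
  have hU := hX.eigenvectorUnitary.2
  symm
  apply Matrix.PosSemidef.eq_sqrt_of_sq_eq
  · have hd : (diagonal (fun i => ((|hX.eigenvalues i| : ℝ) : ℂ))).PosSemidef :=
      Matrix.posSemidef_diagonal_iff.mpr fun i =>
        Complex.zero_le_real.mpr (abs_nonneg _)
    have := hd.mul_mul_conjTranspose_same (hX.eigenvectorUnitary : Matrix n n ℂ)
    rwa [← Matrix.star_eq_conjTranspose] at this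
  · have hfun : (fun i => ((|hX.eigenvalues i| : ℝ) : ℂ) * ((|hX.eigenvalues i| : ℝ) : ℂ))
        = fun i => (RCLike.ofReal ∘ hX.eigenvalues) i * (RCLike.ofReal ∘ hX.eigenvalues) i := by
      funext i
      simp only [Function.comp_apply]
      rw [← Complex.ofReal_mul, abs_mul_abs_self]
      norm_cast
    rw [pow_two, conj_diag_mul hU, hfun, ← conj_diag_mul hU, ← spectral_theorem' hX, hX.eq]

lemma traceNorm_hermitian {X : Matrix n n ℂ} (hX : X.IsHermitian) :
    traceNorm X = ∑ i, |hX.eigenvalues i| := by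
  rw [traceNorm, sqrt_conj_diag hX, Matrix.trace_mul_cycle,
    (Matrix.mem_unitaryGroup_iff').mp hX.eigenvectorUnitary.2, one_mul, Matrix.trace_diagonal]
  simp [Complex.re_sum]

lemma sum_abs_diag_le {X V : Matrix n n ℂ} (hX : X.IsHermitian)
    (hV : V ∈ Matrix.unitaryGroup n ℂ) :
    ∑ i, ‖(star V * X * V) i i‖ ≤ traceNorm X := by
  rw [traceNorm_hermitian hX]
  set U : Matrix n n ℂ := (hX.eigenvectorUnitary : Matrix n n ℂ) with hU
  have hUu : U ∈ Matrix.unitaryGroup n ℂ := hX.eigenvectorUnitary.2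
  set W := star U * V with hWdef
  have hWW : W * star W = 1 := by
    rw [hWdef, StarMul.star_mul, star_star]
    calc star U * V * (star V * U) = star U * (V * star V) * U := by
          simp only [mul_assoc]
      _ = 1 := by
          rw [Matrix.mem_unitaryGroup_iff.mp hV, mul_one,
            Matrix.mem_unitaryGroup_iff'.mp hUu]
  have hcast : (RCLike.ofReal ∘ hX.eigenvalues : n → ℂ)
      = fun j => ((hX.eigenvalues j : ℝ) : ℂ) := rfl
  have hconj : star V * X * V
      = star W * (diagonal (fun j => ((hX.eigenvalues j : ℝ) : ℂ)) * W) := by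
    conv_lhs => rw [spectral_theorem' hX]
    rw [hcast, hWdef, StarMul.star_mul, star_star, ← hU]
    simp only [mul_assoc]
  have hentry : ∀ i, (star V * X * V) i i
      = ∑ j, (hX.eigenvalues j : ℂ) * (Complex.normSq (W j i) : ℂ) := by
    intro i
    rw [hconj, Matrix.mul_apply]
    refine Finset.sum_congr rfl fun j _ => ?_
    rw [Matrix.diagonal_mul, Matrix.star_apply, Complex.normSq_eq_conj_mul_self,
      RCLike.star_def]
    ring
  have hrow : ∀ j, ∑ i, Complex.normSq (W j i) = 1 := by
    intro j
    have h1 : (W * star W) j j = 1 := by rw [hWW]; simp [Matrix.one_apply]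
    rw [Matrix.mul_apply] at h1
    have h2 : ∑ i, (Complex.normSq (W j i) : ℂ) = 1 := by
      rw [← h1]
      refine Finset.sum_congr rfl fun i _ => ?_
      rw [Matrix.star_apply, RCLike.star_def, Complex.mul_conj]
    have := congrArg Complex.re h2
    rwa [Complex.re_sum] at this
  calc ∑ i, ‖(star V * X * V) i i‖
      ≤ ∑ i, ∑ j, |hX.eigenvalues j| * Complex.normSq (W j i) := by
        refine Finset.sum_le_sum fun i _ => ?_
        rw [hentry i]
        refine le_trans (norm_sum_le _ _) (Finset.sum_le_sum fun j _ => ?_)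
        rw [norm_mul, Complex.norm_real, Complex.norm_real, Real.norm_eq_abs,
          Real.norm_eq_abs, abs_of_nonneg (Complex.normSq_nonneg _)]
    _ = ∑ j, |hX.eigenvalues j| := by
        rw [Finset.sum_comm]
        refine Finset.sum_congr rfl fun j _ => ?_
        rw [← Finset.mul_sum, hrow j, mul_one]

lemma abs_dot_le (x y : n → ℂ) :
    ‖star x ⬝ᵥ y‖ ^ 2 ≤ (star x ⬝ᵥ x).re * (star y ⬝ᵥ y).re := by
  let x' : EuclideanSpace ℂ n := (WithLp.equiv 2 _).symm x
  let y' : EuclideanSpace ℂ n := (WithLp.equiv 2 _).symm y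
  have key : ‖(inner ℂ x' y' : ℂ)‖ ≤ ‖x'‖ * ‖y'‖ := norm_inner_le_norm x' y'
  have h1 : (inner ℂ x' y' : ℂ) = star x ⬝ᵥ y := by rw [dotProduct_comm]; rfl
  have hx : (star x ⬝ᵥ x).re = ‖x'‖ ^ 2 := by
    have h2 : (inner ℂ x' x' : ℂ) = star x ⬝ᵥ x := by rw [dotProduct_comm]; rfl
    rw [← h2]
    exact inner_self_eq_norm_sq (𝕜 := ℂ) x'
  have hy : (star y ⬝ᵥ y).re = ‖y'‖ ^ 2 := by
    have h2 : (inner ℂ y' y' : ℂ) = star y ⬝ᵥ y := by rw [dotProduct_comm]; rfl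
    rw [← h2]
    exact inner_self_eq_norm_sq (𝕜 := ℂ) y'
  rw [h1] at key
  rw [hx, hy]
  nlinarith [norm_nonneg x', norm_nonneg y', norm_nonneg (star x ⬝ᵥ y)]

lemma col_unit {U : Matrix n n ℂ} (hU : U ∈ Matrix.unitaryGroup n ℂ) (i : n) :
    star (fun k => U k i) ⬝ᵥ (fun k => U k i) = 1 := by
  have h1 : (star U * U) i i = 1 := by
    rw [Matrix.mem_unitaryGroup_iff'.mp hU]; simp [Matrix.one_apply]
  rw [← h1, Matrix.mul_apply]
  simp [dotProduct, Matrix.star_apply]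

lemma trace_re_le_sqrt {C M : Matrix n n ℂ} (hM : M.PosSemidef) (hC : C * Cᴴ = M) :
    C.trace.re ≤ hM.sqrt.trace.re := by
  rw [trace_sqrt_re hM]
  set U : Matrix n n ℂ := (hM.1.eigenvectorUnitary : Matrix n n ℂ) with hU
  have hUu : U ∈ Matrix.unitaryGroup n ℂ := hM.1.eigenvectorUnitary.2
  rw [← trace_conj U C hUu, Matrix.trace, Complex.re_sum]
  simp only [Matrix.diag_apply]
  refine Finset.sum_le_sum fun i _ => ?_
  have h1 : (star U * C * U) i i
      = star (Cᴴ *ᵥ fun k => U k i) ⬝ᵥ (fun k => U k i) := by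
    rw [entry_dot, Matrix.star_mulVec, Matrix.conjTranspose_conjTranspose,
      ← Matrix.dotProduct_mulVec]
  have h2 : (star (Cᴴ *ᵥ fun k => U k i) ⬝ᵥ (Cᴴ *ᵥ fun k => U k i)).re
      = hM.1.eigenvalues i := by
    have e1 : star (Cᴴ *ᵥ fun k => U k i) ⬝ᵥ (Cᴴ *ᵥ fun k => U k i)
        = (star U * M * U) i i := by
      rw [Matrix.star_mulVec, Matrix.conjTranspose_conjTranspose,
        ← Matrix.dotProduct_mulVec, Matrix.mulVec_mulVec, hC, entry_dot]
    rw [e1, hM.1.star_mul_self_mul_eq_diagonal]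
    simp [Matrix.diagonal_apply]
  have h3 : ((star fun k => U k i) ⬝ᵥ fun k => U k i).re = 1 := by
    rw [col_unit hUu i]
    simp
  have cs := abs_dot_le (Cᴴ *ᵥ fun k => U k i) (fun k => U k i)
  rw [h2, h3, mul_one] at cs
  have habs : ‖star (Cᴴ *ᵥ fun k => U k i) ⬝ᵥ fun k => U k i‖
      ≤ Real.sqrt (hM.1.eigenvalues i) := by
    have h4 := Real.sqrt_le_sqrt cs
    rwa [Real.sqrt_sq (norm_nonneg _)] at h4
  rw [h1]
  exact le_trans (Complex.re_le_norm _) habs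

lemma powers_stormer {ρ σ : Matrix n n ℂ}
    (hρ : ρ.PosSemidef) (hρtr : ρ.trace = 1)
    (hσ : σ.PosSemidef) (hσtr : σ.trace = 1) :
    2 - 2 * (hρ.sqrt * hσ.sqrt).trace.re ≤ traceNorm (ρ - σ) := by
  have hAps := hρ.posSemidef_sqrt
  have hBps := hσ.posSemidef_sqrt
  set A := hρ.sqrt with hA
  set B := hσ.sqrt with hB
  have hAA : A * A = ρ := by rw [hA]; exact hρ.sqrt_mul_self
  have hBB : B * B = σ := by rw [hB]; exact hσ.sqrt_mul_self
  have hΔ : (A - B).IsHermitian := hAps.1.sub hBps.1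
  set V : Matrix n n ℂ := (hΔ.eigenvectorUnitary : Matrix n n ℂ) with hV
  have hVu : V ∈ Matrix.unitaryGroup n ℂ := hΔ.eigenvectorUnitary.2
  set l := hΔ.eigenvalues with hl
  have hdiag : star V * (A - B) * V = diagonal (fun i => ((l i : ℝ) : ℂ)) := by
    have h0 := hΔ.star_mul_self_mul_eq_diagonal
    rwa [show (RCLike.ofReal ∘ hΔ.eigenvalues : n → ℂ) = fun i => ((l i : ℝ) : ℂ) from rfl]
      at h0
  set P := star V * A * V with hP
  set Q := star V * B * V with hQ
  have hPQ : P - Q = diagonal (fun i => ((l i : ℝ) : ℂ)) := by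
    rw [hP, hQ, ← hdiag, Matrix.mul_sub, Matrix.sub_mul]
  have hconj : star V * (ρ - σ) * V = P * P - Q * Q := by
    rw [← hAA, ← hBB, Matrix.mul_sub, Matrix.sub_mul, conj_mul V A A hVu,
      conj_mul V B B hVu]
  have hkey : ∀ i, (star V * (ρ - σ) * V) i i = (l i : ℂ) * (P i i + Q i i) := by
    intro i
    have e2 : P * P - Q * Q = (P - Q) * P + Q * (P - Q) := by noncomm_ring
    rw [hconj, e2, hPQ]
    simp only [Matrix.add_apply, Matrix.diagonal_mul, Matrix.mul_diagonal]
    ring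
  have hPpos : ∀ i, 0 ≤ P i i := fun i => by
    rw [hP, entry_dot]
    exact hAps.dotProduct_mulVec_nonneg _
  have hQpos : ∀ i, 0 ≤ Q i i := fun i => by
    rw [hQ, entry_dot]
    exact hBps.dotProduct_mulVec_nonneg _
  have hlam : ∀ i, l i = (P i i).re - (Q i i).re := by
    intro i
    have h0 := congrArg (fun M : Matrix n n ℂ => (M i i).re) hPQ
    simp only [Matrix.sub_apply, Matrix.diagonal_apply_eq, Complex.sub_re,
      Complex.ofReal_re] at h0
    linarith
  have hterm : ∀ i, l i ^ 2 ≤ ‖(star V * (ρ - σ) * V) i i‖ := by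
    intro i
    have h1 := (Complex.nonneg_iff.mp (hPpos i)).1
    have h2 := (Complex.nonneg_iff.mp (hQpos i)).1
    have h1' := (Complex.nonneg_iff.mp (hPpos i)).2
    have h2' := (Complex.nonneg_iff.mp (hQpos i)).2
    have hre : P i i + Q i i = (((P i i).re + (Q i i).re : ℝ) : ℂ) := by
      apply Complex.ext <;> simp [← h1', ← h2']
    rw [hkey i, norm_mul, hre, Complex.norm_real, Complex.norm_real, Real.norm_eq_abs, Real.norm_eq_abs]
    have h3 := hlam i
    have h4 : |l i| ≤ (P i i).re + (Q i i).re := by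
      rw [abs_le]
      constructor <;> linarith
    rw [abs_of_nonneg (by linarith : (0:ℝ) ≤ (P i i).re + (Q i i).re)]
    nlinarith [sq_abs (l i), abs_nonneg (l i)]
  have hsum : ∑ i, l i ^ 2 ≤ traceNorm (ρ - σ) :=
    le_trans (Finset.sum_le_sum fun i _ => hterm i) (sum_abs_diag_le (hρ.1.sub hσ.1) hVu)
  have e1 : ((A - B) * (A - B)).trace = ∑ i, (((l i : ℝ) : ℂ))^2 := by
    rw [← trace_conj V ((A - B) * (A - B)) hVu, conj_mul V _ _ hVu, hdiag,
      diagonal_mul_diagonal, Matrix.trace_diagonal]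
    simp [pow_two]
  have e2 : ((A - B) * (A - B)).trace = 2 - ((A * B).trace + (A * B).trace) := by
    have h0 : (A - B) * (A - B) = A * A + B * B - (A * B + B * A) := by noncomm_ring
    rw [h0, Matrix.trace_sub, Matrix.trace_add, Matrix.trace_add, hAA, hBB, hρtr, hσtr,
      Matrix.trace_mul_comm B A]
    norm_num
  have e3 := congrArg Complex.re (e1.symm.trans e2)
  rw [Complex.re_sum] at e3
  simp only [← Complex.ofReal_pow, Complex.ofReal_re, Complex.sub_re, Complex.add_re] at e3
  have e4 : ∑ i, l i ^ 2 = 2 - 2 * (A * B).trace.re := by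
    rw [e3]
    norm_num
    ring
  linarith [hsum, e4.symm.le, e4.le]

end FvdG

/-- If `|ρ − σ|₁ ≤ ε` then `F(ρ,σ) ≥ 1 − ε`. -/
theorem fidelity_ge_of_traceNorm_le {n : ℕ}
    (ρ σ : Matrix (Fin n) (Fin n) ℂ)
    (hρ : ρ.PosSemidef) (hρtr : ρ.trace = 1)
    (hσ : σ.PosSemidef) (hσtr : σ.trace = 1)
    (ε : ℝ) (hε : 0 ≤ ε)
    (h : traceNorm (ρ - σ) ≤ ε) :
    fidelity ρ σ ≥ 1 - ε := by
  have hAps := hρ.posSemidef_sqrt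
  have hBps := hσ.posSemidef_sqrt
  set A := hρ.sqrt with hA
  set B := hσ.sqrt with hB
  have hM : (A * σ * A).PosSemidef := by
    have := hσ.mul_mul_conjTranspose_same A
    rwa [hAps.1.eq] at this
  have hCC : (A * B) * (A * B)ᴴ = A * σ * A := by
    rw [conjTranspose_mul, hAps.1.eq, hBps.1.eq]
    calc A * B * (B * A) = A * (B * B) * A := by noncomm_ring
      _ = A * σ * A := by rw [hσ.sqrt_mul_self]
  have hI : (A * B).trace.re ≤ hM.sqrt.trace.re := FvdG.trace_re_le_sqrt hM hCC
  have hII : 2 - 2 * (A * B).trace.re ≤ traceNorm (ρ - σ) :=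
    FvdG.powers_stormer hρ hρtr hσ hσtr
  have hs0 : 0 ≤ hM.sqrt.trace.re := FvdG.trace_sqrt_nonneg hM
  rw [fidelity, dif_pos hρ, dif_pos hM]
  nlinarith [sq_nonneg (hM.sqrt.trace.re - 1)]
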